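/- Let A : [0,∞) → [0,∞) be a càdlàg function with e^{-λt}A(t) → W > 0 (λ > 0), τ_n = inf{t : A(t) ≥ n}, and let ν_n be positive reals with n·ν_n → θ ∈ (0,∞). Then for every fixed t ∈ ℝ, ∫_{-τ_n}^{t} ν_n A(τ_n + s) ds → (θ/λ) e^{λt} as n → ∞. -/

import Mathlib

/-!
Since `e^{-λt} A(t) → W`, integration gives `∫_0^T A ~ (W/λ) e^{λT}`. The first-passage
times satisfy `n e^{-λτ_n} → W`: right-continuity gives `A(τ_n) ≥ n`, while `A < n` just
before `τ_n`. After the substitution `u = τ_n + s` the integral is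
`ν_n ∫_0^{τ_n+t} A ≈ ν_n (W/λ) e^{λ(τ_n+t)} ≈ (n ν_n) e^{λt} / λ → (θ/λ) e^{λt}`.
A càdlàg function is bounded on compact intervals; this makes `A` locally integrable and
forces `τ_n → ∞`.
-/

open Filter Set intervalIntegral MeasureTheory Topology Asymptotics

lemma Filter.Tendsto.exists_mem_isBounded_image {α E : Type*} [PseudoMetricSpace E]
    {f : α → E} {F : Filter α} {l : E} (h : Tendsto f F (𝓝 l)) :
    ∃ U ∈ F, Bornology.IsBounded (f '' U) :=
  ⟨f ⁻¹' Metric.ball l 1, h (Metric.ball_mem_nhds l one_pos),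
    Metric.isBounded_ball.subset (image_preimage_subset f _)⟩

lemma isBounded_image_Icc_of_cadlag {E : Type*} [PseudoMetricSpace E] {A : ℝ → E} {a : ℝ}
    (hrc : ∀ t, a ≤ t → ContinuousWithinAt A (Ici t) t)
    (hll : ∀ t, a < t → ∃ l, Tendsto A (𝓝[<] t) (𝓝 l)) (b : ℝ) :
    Bornology.IsBounded (A '' Icc a b) := by
  refine isCompact_Icc.induction_on (p := fun s => Bornology.IsBounded (A '' s)) (by simp)
    (fun s t hst ht => ht.subset (image_mono hst))
    (fun s t hs ht => by simpa only [image_union] using hs.union ht) fun x hx => ?_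
  obtain ⟨U, hU, hUb⟩ := (hrc x hx.1).tendsto.exists_mem_isBounded_image
  rcases hx.1.eq_or_lt with rfl | hax
  · exact ⟨U, nhdsWithin_mono _ Icc_subset_Ici_self hU, hUb⟩
  · obtain ⟨l, hl⟩ := hll x hax
    obtain ⟨V, hV, hVb⟩ := hl.exists_mem_isBounded_image
    refine ⟨V ∪ U, mem_nhdsWithin_of_mem_nhds ?_, ?_⟩
    · rw [← nhdsLT_sup_nhdsGE]
      exact union_mem_sup hV hU
    · simpa only [image_union] using hVb.union hUb

lemma intervalIntegrable_of_isBounded_image {f : ℝ → ℝ} {a b : ℝ} (hf : Measurable f)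
    (hab : a ≤ b) (hb : Bornology.IsBounded (f '' Icc a b)) :
    IntervalIntegrable f volume a b := by
  obtain ⟨C, hC⟩ := isBounded_iff_forall_norm_le.1 hb
  refine (intervalIntegrable_iff_integrableOn_Icc_of_le hab).2 <|
    Measure.integrableOn_of_bounded (M := C) measure_Icc_lt_top.ne hf.aestronglyMeasurable
      ((ae_restrict_iff' measurableSet_Icc).2 (Eventually.of_forall fun x hx => ?_))
  exact hC _ (mem_image_of_mem f hx)

lemma integral_exp_mul {lam : ℝ} (hlam : lam ≠ 0) (a b : ℝ) :
    ∫ u in a..b, Real.exp (lam * u) = (Real.exp (lam * b) - Real.exp (lam * a)) / lam := by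
  rw [integral_comp_mul_left (fun u => Real.exp u) hlam, integral_exp, smul_eq_mul,
    inv_mul_eq_div]

lemma tendsto_exp_mul_atTop {lam : ℝ} (hlam : 0 < lam) :
    Tendsto (fun t => Real.exp (lam * t)) atTop atTop :=
  Real.tendsto_exp_atTop.comp (tendsto_id.const_mul_atTop hlam)

lemma tendsto_atTop_of_tendsto_exp_neg_mul {A : ℝ → ℝ} {lam W : ℝ} (hlam : 0 < lam)
    (hW : 0 < W)
    (hlim : Tendsto (fun t => Real.exp (-lam * t) * A t) atTop (𝓝 W)) :
    Tendsto A atTop atTop :=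
  ((tendsto_exp_mul_atTop hlam).atTop_mul_pos hW hlim).congr fun t => by
    rw [← mul_assoc, ← Real.exp_add, neg_mul, add_neg_cancel, Real.exp_zero, one_mul]

section IntegralAsymptotics

variable {f : ℝ → ℝ} {lam : ℝ}

lemma isLittleO_integral_exp_mul (hlam : 0 < lam)
    (hint : ∀ T, 0 ≤ T → IntervalIntegrable f volume 0 T)
    (hf : f =o[atTop] fun t => Real.exp (lam * t)) :
    (fun T => ∫ u in 0..T, f u) =o[atTop] fun T => Real.exp (lam * T) := by
  refine isLittleO_iff.2 fun c hc => ?_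
  obtain ⟨T₀, hT₀⟩ := eventually_atTop.1 (hf.def (by positivity : 0 < c * lam / 2))
  set T₁ := max T₀ 0
  filter_upwards [eventually_ge_atTop T₁, (tendsto_exp_mul_atTop hlam).eventually_ge_atTop
    (2 / c * ‖∫ u in 0..T₁, f u‖)] with T hT hexp
  have hT₁ : 0 ≤ T₁ := le_max_right _ _
  have htail :
      ‖∫ u in T₁..T, f u‖ ≤ c / 2 * (Real.exp (lam * T) - Real.exp (lam * T₁)) := by
    calc ‖∫ u in T₁..T, f u‖ ≤ ∫ u in T₁..T, c * lam / 2 * Real.exp (lam * u) := by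
          refine norm_integral_le_of_norm_le hT (Eventually.of_forall fun u hu => ?_)
            (Continuous.intervalIntegrable (by fun_prop) _ _)
          simpa using hT₀ u ((le_max_left _ _).trans hu.1.le)
      _ = c / 2 * (Real.exp (lam * T) - Real.exp (lam * T₁)) := by
          rw [intervalIntegral.integral_const_mul, integral_exp_mul hlam.ne']
          field_simp
  have hsplit := integral_add_adjacent_intervals (hint T₁ hT₁)
    ((hint T₁ hT₁).symm.trans (hint T (hT₁.trans hT)))
  rw [← hsplit, Real.norm_of_nonneg (Real.exp_pos _).le]
  calc _ ≤ ‖∫ u in 0..T₁, f u‖ + ‖∫ u in T₁..T, f u‖ := norm_add_le _ _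
    _ ≤ c / 2 * Real.exp (lam * T) + c / 2 * (Real.exp (lam * T) - Real.exp (lam * T₁)) := by
        gcongr
        rw [div_mul_eq_mul_div, div_le_iff₀' hc] at hexp
        linarith
    _ ≤ c * Real.exp (lam * T) := by nlinarith [Real.exp_pos (lam * T₁)]

lemma tendsto_exp_neg_mul_integral {W : ℝ} (hlam : 0 < lam)
    (hint : ∀ T, 0 ≤ T → IntervalIntegrable f volume 0 T)
    (hlim : Tendsto (fun t => Real.exp (-lam * t) * f t) atTop (𝓝 W)) :
    Tendsto (fun T => Real.exp (-lam * T) * ∫ u in 0..T, f u) atTop (𝓝 (W / lam)) := by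
  have hexp_ne (t : ℝ) : Real.exp (lam * t) ≠ 0 := (Real.exp_pos _).ne'
  have hexp_neg (t : ℝ) : Real.exp (-lam * t) = (Real.exp (lam * t))⁻¹ := by
    rw [neg_mul, Real.exp_neg]
  have hsmall : (fun t => f t - W * Real.exp (lam * t)) =o[atTop]
      fun t => Real.exp (lam * t) := by
    refine (isLittleO_iff_tendsto fun t h => absurd h (hexp_ne t)).2 ?_
    refine (sub_self W ▸ hlim.sub_const W).congr fun t => ?_
    rw [hexp_neg]; field_simp
  have hdecay : Tendsto (fun T => Real.exp (-lam * T)) atTop (𝓝 0) :=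
    (tendsto_exp_mul_atTop hlam).inv_tendsto_atTop.congr fun t => (hexp_neg t).symm
  have hexp_int (a b : ℝ) : IntervalIntegrable (fun u => W * Real.exp (lam * u)) volume a b :=
    Continuous.intervalIntegrable (by fun_prop) a b
  have hmain := (isLittleO_integral_exp_mul hlam (fun T hT => (hint T hT).sub (hexp_int 0 T))
    hsmall).tendsto_div_nhds_zero.add ((hdecay.const_sub 1).const_mul (W / lam))
  rw [sub_zero, mul_one, zero_add] at hmain
  refine hmain.congr' ?_
  filter_upwards [eventually_ge_atTop 0] with T hT
  rw [integral_sub (hint T hT) (hexp_int 0 T),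
    intervalIntegral.integral_const_mul, integral_exp_mul hlam.ne', mul_zero, Real.exp_zero,
    hexp_neg]
  field_simp
  ring

end IntegralAsymptotics

lemma le_apply_csInf_of_continuousWithinAt {α β : Type*} [ConditionallyCompleteLinearOrder α]
    [TopologicalSpace α] [OrderTopology α] [TopologicalSpace β] [Preorder β]
    [ClosedIciTopology β] {f : α → β} {S : Set α} {c : β} (hne : S.Nonempty)
    (hbdd : BddBelow S) (hf : ContinuousWithinAt f (Ici (sInf S)) (sInf S))
    (hc : ∀ s ∈ S, c ≤ f s) : c ≤ f (sInf S) :=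
  haveI : (𝓝[S] sInf S).NeBot := mem_closure_iff_nhdsWithin_neBot.1 (csInf_mem_closure hne hbdd)
  ge_of_tendsto (hf.mono fun _ hs => csInf_le hbdd hs)
    (eventually_nhdsWithin_of_forall hc)

noncomputable def firstPassage (A : ℝ → ℝ) (c : ℝ) : ℝ :=
  sInf {t | 0 ≤ t ∧ c ≤ A t}

section firstPassage

variable {A : ℝ → ℝ} {c : ℝ}

lemma bddBelow_firstPassage_set : BddBelow {t | 0 ≤ t ∧ c ≤ A t} :=
  ⟨0, fun _ ht => ht.1⟩

lemma le_apply_firstPassage (hne : ∃ t, 0 ≤ t ∧ c ≤ A t)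
    (hrc : ∀ t, 0 ≤ t → ContinuousWithinAt A (Ici t) t) : c ≤ A (firstPassage A c) :=
  le_apply_csInf_of_continuousWithinAt hne bddBelow_firstPassage_set
    (hrc _ (le_csInf hne fun _ ht => ht.1)) fun _ ht => ht.2

lemma apply_lt_of_lt_firstPassage {u : ℝ} (hu : 0 ≤ u) (hlt : u < firstPassage A c) :
    A u < c :=
  not_le.1 fun hcu => hlt.not_ge (csInf_le bddBelow_firstPassage_set ⟨hu, hcu⟩)

lemma le_firstPassage_of_forall_lt {M : ℝ} (hne : ∃ t, 0 ≤ t ∧ c ≤ A t)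
    (hM : ∀ u ∈ Icc 0 M, A u < c) :
    M ≤ firstPassage A c :=
  le_csInf hne fun t ht => not_lt.1 fun htM => (hM t ⟨ht.1, htM.le⟩).not_ge ht.2

lemma tendsto_firstPassage_atTop (hne : ∀ c, ∃ t, 0 ≤ t ∧ c ≤ A t)
    (hbdd : ∀ M, Bornology.IsBounded (A '' Icc 0 M)) :
    Tendsto (firstPassage A) atTop atTop := by
  refine tendsto_atTop.2 fun M => ?_
  obtain ⟨C, hC⟩ := (hbdd M).bddAbove
  filter_upwards [eventually_gt_atTop C] with c hc
  exact le_firstPassage_of_forall_lt (hne c) fun u hu => (hC (mem_image_of_mem A hu)).trans_lt hc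

lemma tendsto_nat_mul_exp_neg_firstPassage {lam W : ℝ}
    (hlim : Tendsto (fun t => Real.exp (-lam * t) * A t) atTop (𝓝 W))
    (htop : Tendsto (firstPassage A) atTop atTop)
    (hge : ∀ n : ℕ, (n : ℝ) ≤ A (firstPassage A n)) :
    Tendsto (fun n : ℕ => n * Real.exp (-lam * firstPassage A n)) atTop (𝓝 W) := by
  set τ : ℕ → ℝ := fun n => firstPassage A n
  have hτ : Tendsto τ atTop atTop := htop.comp tendsto_natCast_atTop_atTop
  have hδ : Tendsto (fun n : ℕ => 1 / ((n : ℝ) + 1)) atTop (𝓝 0) :=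
    tendsto_one_div_add_atTop_nhds_zero_nat
  -- the lower bound is read off just before `τ n`, at `u n = τ n - 1 / (n + 1)`
  have hu : Tendsto (fun n => τ n - 1 / ((n : ℝ) + 1)) atTop atTop := by
    simpa [sub_eq_add_neg] using hτ.atTop_add hδ.neg
  have hlower : Tendsto (fun n : ℕ => Real.exp (-lam * (1 / ((n : ℝ) + 1))) *
      (Real.exp (-lam * (τ n - 1 / ((n : ℝ) + 1))) * A (τ n - 1 / ((n : ℝ) + 1))))
      atTop (𝓝 W) := by
    have hexp := (Real.continuous_exp.tendsto _).comp (hδ.const_mul (-lam))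
    simpa only [mul_zero, Real.exp_zero, one_mul, Function.comp_def] using hexp.mul (hlim.comp hu)
  refine tendsto_of_tendsto_of_tendsto_of_le_of_le' hlower (hlim.comp hτ) ?_ ?_
  · filter_upwards [hτ.eventually_ge_atTop 1] with n hn
    have hδ1 : 1 / ((n : ℝ) + 1) ≤ 1 := by
      rw [div_le_one (by positivity)]; linarith [(n.cast_nonneg : (0 : ℝ) ≤ n)]
    have hA : A (τ n - 1 / ((n : ℝ) + 1)) < n :=
      apply_lt_of_lt_firstPassage (by linarith) (sub_lt_self _ (by positivity))
    calc _ = Real.exp (-lam * τ n) * A (τ n - 1 / ((n : ℝ) + 1)) := by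
          rw [← mul_assoc, ← Real.exp_add]; ring_nf
      _ ≤ Real.exp (-lam * τ n) * n := by gcongr
      _ = _ := mul_comm _ _
  · exact Eventually.of_forall fun n => by
      rw [mul_comm]; exact mul_le_mul_of_nonneg_left (hge n) (Real.exp_pos _).le

end firstPassage

theorem stmt_4_general (A : ℝ → ℝ) (lam W θ : ℝ) (hlam : 0 < lam) (hW : 0 < W)
    (hmeas : Measurable A)
    (hrc : ∀ t, 0 ≤ t → ContinuousWithinAt A (Ici t) t)
    (hll : ∀ t, 0 < t → ∃ l, Tendsto A (nhdsWithin t (Iio t)) (nhds l))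
    (hlim : Tendsto (fun t => Real.exp (-lam * t) * A t) atTop (nhds W))
    (τ : ℕ → ℝ) (hτ : ∀ n, τ n = sInf {t | 0 ≤ t ∧ (n : ℝ) ≤ A t})
    (ν : ℕ → ℝ)
    (hνlim : Tendsto (fun n : ℕ => (n : ℝ) * ν n) atTop (nhds θ)) :
    ∀ t : ℝ,
      Tendsto (fun n : ℕ => ∫ s in (-(τ n))..t, ν n * A (τ n + s)) atTop
        (nhds (θ / lam * Real.exp (lam * t))) := by
  intro t
  obtain rfl : τ = fun n : ℕ => firstPassage A n := funext hτ
  have hbdd := isBounded_image_Icc_of_cadlag hrc hll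
  have hne (c : ℝ) : ∃ t, 0 ≤ t ∧ c ≤ A t :=
    (((tendsto_atTop_of_tendsto_exp_neg_mul hlam hW hlim).eventually_ge_atTop c).and
      (eventually_ge_atTop 0)).exists.imp fun _ h => h.symm
  have hτtop := tendsto_firstPassage_atTop hne hbdd
  have hnτ := tendsto_nat_mul_exp_neg_firstPassage hlim hτtop fun n =>
    le_apply_firstPassage (hne n) hrc
  have hint := tendsto_exp_neg_mul_integral hlam
    (fun T hT => intervalIntegrable_of_isBounded_image hmeas hT (hbdd T)) hlim
  have hlimit := ((hνlim.mul (hnτ.inv₀ hW.ne')).mul_const (Real.exp (lam * t))).mul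
    (hint.comp (tendsto_atTop_add_const_right _ t (hτtop.comp tendsto_natCast_atTop_atTop)))
  rw [show θ * W⁻¹ * Real.exp (lam * t) * (W / lam) = θ / lam * Real.exp (lam * t) by
    field_simp] at hlimit
  -- for `n ≠ 0`, `ν_n ∫_0^{τ_n+t} A`
  -- `= (n ν_n) (n e^{-λτ_n})⁻¹ e^{λt} (e^{-λ(τ_n+t)} ∫_0^{τ_n+t} A)`
  refine hlimit.congr' ((eventually_ne_atTop 0).mono fun n hn => ?_)
  have hexp : Real.exp (-lam * (firstPassage A n + t)) =
      Real.exp (-lam * firstPassage A n) * (Real.exp (lam * t))⁻¹ := by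
    rw [← Real.exp_neg, ← Real.exp_add]; ring_nf
  simp only [Function.comp_apply, hexp]
  rw [intervalIntegral.integral_const_mul, integral_comp_add_left A, add_neg_cancel]
  field_simp

/-- For càdlàg `A` with `e^{-λ t} A(t) → W > 0`, first-passage times `τ_n`, and
mutation rates `ν_n` with `n ν_n → θ`, for each `t ∈ ℝ`:
`∫_{-τ_n}^t ν_n A(τ_n + s) ds → (θ/λ) e^{λ t}`. -/
theorem stmt_4 (A : ℝ → ℝ) (lam W θ : ℝ) (hlam : 0 < lam) (hW : 0 < W) (hθ : 0 < θ)
    (hmeas : Measurable A)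
    (hnonneg : ∀ t, 0 ≤ t → 0 ≤ A t)
    (hrc : ∀ t, 0 ≤ t → ContinuousWithinAt A (Ici t) t)
    (hll : ∀ t, 0 < t → ∃ l, Tendsto A (nhdsWithin t (Iio t)) (nhds l))
    (hlim : Tendsto (fun t => Real.exp (-lam * t) * A t) atTop (nhds W))
    (τ : ℕ → ℝ) (hτ : ∀ n, τ n = sInf {t | 0 ≤ t ∧ (n : ℝ) ≤ A t})
    (ν : ℕ → ℝ) (hν : ∀ n, 0 < ν n)
    (hνlim : Tendsto (fun n : ℕ => (n : ℝ) * ν n) atTop (nhds θ)) :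
    ∀ t : ℝ,
      Tendsto (fun n : ℕ => ∫ s in (-(τ n))..t, ν n * A (τ n + s)) atTop
        (nhds (θ / lam * Real.exp (lam * t))) :=
  stmt_4_general A lam W θ hlam hW hmeas hrc hll hlim τ hτ ν hνlim
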